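/- Let p be a prime, s a positive integer with base-p expansion s = s_k p^k + ... + s_1 p + s_0. The multinomial coefficient associated to the composition of s consisting of s_k copies of p^k, ..., s_0 copies of p^0 (a composition into digits_p(s) parts) is prime to p. -/

import Mathlib

/-- The sum of the digits of `n` in base `p`. -/
def digitSum (p n : ℕ) : ℕ := (Nat.digits p n).sum

/-- The multinomial coefficient `s!/(λ₁!⋯λₙ!)` associated to a list `l = [λ₁,…,λₙ]`. -/
def listMultinomial (l : List ℕ) : ℕ :=
  Nat.factorial l.sum / (l.map Nat.factorial).prod

/-- The composition of `s` consisting of `s_i` copies of `p^i` for each base-`p` digit `s_i`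
of `s`. -/
def digitComposition (p s : ℕ) : List ℕ :=
  ((Nat.digits p s).zipIdx.map (fun ic => List.replicate ic.1 (p ^ ic.2))).flatten

/-!
Legendre's formula `(p - 1) vₚ(n!) = n - digitSum p n` turns the `p`-adic valuation of a
multinomial coefficient into a digit-sum defect:
`(p - 1) vₚ(s! / ∏ λᵢ!) = ∑ digitSum p λᵢ - digitSum p s`.
Every part of the digit composition is a power of `p`, with digit sum `1`, and there are exactly
`digitSum p s` parts, so the defect vanishes.
-/

open Nat

section Multinomial

theorem prod_map_factorial_dvd_factorial_sum (l : List ℕ) : (l.map factorial).prod ∣ l.sum ! := by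
  induction l with
  | nil => simp
  | cons a t ih =>
    simp only [List.map_cons, List.prod_cons, List.sum_cons]
    exact (mul_dvd_mul_left a ! ih).trans (factorial_mul_factorial_dvd_factorial_add a t.sum)

theorem listMultinomial_mul_prod_map_factorial (l : List ℕ) :
    listMultinomial l * (l.map factorial).prod = l.sum ! :=
  Nat.div_mul_cancel (prod_map_factorial_dvd_factorial_sum l)

theorem prod_map_factorial_ne_zero (l : List ℕ) : (l.map factorial).prod ≠ 0 :=
  List.prod_ne_zero (by simp [factorial_ne_zero])

theorem listMultinomial_ne_zero (l : List ℕ) : listMultinomial l ≠ 0 := by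
  intro h
  have := listMultinomial_mul_prod_map_factorial l
  rw [h, zero_mul] at this
  exact factorial_ne_zero _ this.symm

variable {p : ℕ} [Fact p.Prime]

theorem sub_one_mul_padicValNat_factorial_add_digitSum (n : ℕ) :
    (p - 1) * padicValNat p n ! + digitSum p n = n := by
  rw [sub_one_mul_padicValNat_factorial, digitSum]
  exact Nat.sub_add_cancel (digit_sum_le p n)

theorem sub_one_mul_padicValNat_prod_map_factorial_add_sum_digitSum (l : List ℕ) :
    (p - 1) * padicValNat p (l.map factorial).prod + (l.map (digitSum p)).sum = l.sum := by
  induction l with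
  | nil => simp
  | cons a t ih =>
    simp only [List.map_cons, List.prod_cons, List.sum_cons]
    rw [padicValNat.mul (factorial_ne_zero a) (prod_map_factorial_ne_zero t), Nat.mul_add]
    have := sub_one_mul_padicValNat_factorial_add_digitSum (p := p) a
    omega

theorem sub_one_mul_padicValNat_listMultinomial_add_digitSum (l : List ℕ) :
    (p - 1) * padicValNat p (listMultinomial l) + digitSum p l.sum = (l.map (digitSum p)).sum := by
  have hval : padicValNat p (listMultinomial l) + padicValNat p (l.map factorial).prod =
      padicValNat p l.sum ! := by
    rw [← padicValNat.mul (listMultinomial_ne_zero l) (prod_map_factorial_ne_zero l),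
      listMultinomial_mul_prod_map_factorial]
  have hsum := sub_one_mul_padicValNat_factorial_add_digitSum (p := p) l.sum
  have hprod := sub_one_mul_padicValNat_prod_map_factorial_add_sum_digitSum (p := p) l
  rw [← hval, Nat.mul_add] at hsum
  omega

theorem coprime_listMultinomial_of_sum_digitSum_eq {l : List ℕ}
    (h : (l.map (digitSum p)).sum = digitSum p l.sum) : Coprime (listMultinomial l) p := by
  have hp : p.Prime := Fact.out
  have hval : padicValNat p (listMultinomial l) = 0 := by
    have key := sub_one_mul_padicValNat_listMultinomial_add_digitSum (p := p) l
    rw [h, Nat.add_eq_right, mul_eq_zero] at key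
    exact key.resolve_left (Nat.sub_ne_zero_of_lt hp.one_lt)
  rcases padicValNat.eq_zero_iff.mp hval with h1 | h0 | hndvd
  · exact absurd h1 hp.ne_one
  · exact absurd h0 (listMultinomial_ne_zero l)
  · exact ((hp.coprime_iff_not_dvd).mpr hndvd).symm

end Multinomial

section DigitComposition

theorem digitSum_pow {p : ℕ} (hp : 1 < p) (i : ℕ) : digitSum p (p ^ i) = 1 := by
  rw [digitSum, ← mul_one (p ^ i), digits_base_pow_mul hp one_pos, digits_of_lt p 1 one_ne_zero hp]
  simp

theorem length_flatten_map_replicate_zipIdx (p n : ℕ) (d : List ℕ) :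
    ((d.zipIdx n).map fun ic => List.replicate ic.1 (p ^ ic.2)).flatten.length = d.sum := by
  induction d generalizing n with
  | nil => simp
  | cons a t ih => simp [List.zipIdx_cons, ih]

theorem sum_flatten_map_replicate_zipIdx (p n : ℕ) (d : List ℕ) :
    ((d.zipIdx n).map fun ic => List.replicate ic.1 (p ^ ic.2)).flatten.sum =
      p ^ n * ofDigits p d := by
  induction d generalizing n with
  | nil => simp
  | cons a t ih =>
    simp only [List.zipIdx_cons, List.map_cons, List.flatten_cons, List.sum_append,
      List.sum_replicate, smul_eq_mul, ih, ofDigits_cons, pow_succ]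
    ring

theorem length_digitComposition (p s : ℕ) : (digitComposition p s).length = digitSum p s :=
  length_flatten_map_replicate_zipIdx p 0 _

theorem sum_digitComposition (p s : ℕ) : (digitComposition p s).sum = s := by
  rw [digitComposition, sum_flatten_map_replicate_zipIdx, pow_zero, one_mul, ofDigits_digits]

theorem exists_eq_pow_of_mem_digitComposition {p s x : ℕ} (hx : x ∈ digitComposition p s) :
    ∃ i, x = p ^ i := by
  simp only [digitComposition, List.mem_flatten, List.mem_map] at hx
  obtain ⟨_, ⟨⟨_, i⟩, _, rfl⟩, hx⟩ := hx
  exact ⟨i, List.eq_of_mem_replicate hx⟩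

theorem map_digitSum_digitComposition {p : ℕ} (hp : 1 < p) (s : ℕ) :
    (digitComposition p s).map (digitSum p) = List.replicate (digitSum p s) 1 := by
  refine List.eq_replicate_iff.mpr ⟨by rw [List.length_map, length_digitComposition], ?_⟩
  simp only [List.mem_map]
  rintro _ ⟨x, hx, rfl⟩
  obtain ⟨i, rfl⟩ := exists_eq_pow_of_mem_digitComposition hx
  exact digitSum_pow hp i

end DigitComposition

theorem digitComposition_multinomial_coprime_general (p s : ℕ) (hp : Nat.Prime p) :
    (digitComposition p s).length = digitSum p s ∧
    (digitComposition p s).sum = s ∧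
    (∀ x ∈ digitComposition p s, 0 < x) ∧
    Nat.Coprime (listMultinomial (digitComposition p s)) p := by
  have : Fact p.Prime := ⟨hp⟩
  refine ⟨length_digitComposition p s, sum_digitComposition p s, fun x hx => ?_, ?_⟩
  · obtain ⟨i, rfl⟩ := exists_eq_pow_of_mem_digitComposition hx
    exact pow_pos hp.pos i
  · apply coprime_listMultinomial_of_sum_digitSum_eq
    rw [map_digitSum_digitComposition hp.one_lt, List.sum_replicate, smul_eq_mul, mul_one,
      sum_digitComposition]

/-- The composition of `s` given by its base-`p` expansion (with `s_i` copies of `p^i`) is a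
composition of `s` into `digits_p(s)` parts, and its multinomial coefficient is prime to `p`. -/
theorem digitComposition_multinomial_coprime (p s : ℕ) (hp : Nat.Prime p) (hs : 0 < s) :
    (digitComposition p s).length = digitSum p s ∧
    (digitComposition p s).sum = s ∧
    (∀ x ∈ digitComposition p s, 0 < x) ∧
    Nat.Coprime (listMultinomial (digitComposition p s)) p :=
  digitComposition_multinomial_coprime_general p s hp
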